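/- arXiv:1010.3043 — 2 statements merged into one kernel-verified Lean document; each statement's English description precedes it below -/
import Mathlib

section
/- The function h(·|ũ) majorizes L at ũ: for all u ∈ ℝ^J, h(u|ũ) ≥ L(u), and h(ũ|ũ) = L(ũ). -/
noncomputable section

/-- The residual `r_i(u) = Y_i − ⟨M_i, u⟩`, where `M_i` is the i-th row of `M`. -/
def resid {I J : ℕ} (Y : Fin I → ℝ) (M : Matrix (Fin I) (Fin J) ℝ)
    (u : EuclideanSpace ℝ (Fin J)) (i : Fin I) : ℝ :=
  Y i - ∑ j, M i j * u j

/-- The smoothed regularized ℓ1 loss `L(u) = Σ_i √(r_i(u)² + ε) + (μ/2)‖u‖²`. -/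
def Lloss {I J : ℕ} (Y : Fin I → ℝ) (M : Matrix (Fin I) (Fin J) ℝ) (ε μ : ℝ)
    (u : EuclideanSpace ℝ (Fin J)) : ℝ :=
  (∑ i, Real.sqrt ((resid Y M u i) ^ 2 + ε)) + μ / 2 * ‖u‖ ^ 2

/-- The MM surrogate
`h(u|ũ) = Σ_i [√(r_i(ũ)² + ε) + (r_i(u)² − r_i(ũ)²)/(2√(r_i(ũ)² + ε))] + (μ/2)‖u‖²`. -/
def surrogate {I J : ℕ} (Y : Fin I → ℝ) (M : Matrix (Fin I) (Fin J) ℝ) (ε μ : ℝ)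
    (ut u : EuclideanSpace ℝ (Fin J)) : ℝ :=
  (∑ i, (Real.sqrt ((resid Y M ut i) ^ 2 + ε) +
      ((resid Y M u i) ^ 2 - (resid Y M ut i) ^ 2) /
        (2 * Real.sqrt ((resid Y M ut i) ^ 2 + ε)))) + μ / 2 * ‖u‖ ^ 2


lemma sqrt_le_tangent {x y : ℝ} (hx : 0 ≤ x) (hy : 0 < y) :
    Real.sqrt x ≤ Real.sqrt y + (x - y) / (2 * Real.sqrt y) := by
  have hsy : 0 < Real.sqrt y := Real.sqrt_pos.mpr hy
  rw [add_div' _ _ _ (by positivity), le_div_iff₀ (by positivity)]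
  nlinarith [Real.sq_sqrt hy.le, Real.sq_sqrt hx, Real.sqrt_nonneg x,
    sq_nonneg (Real.sqrt x - Real.sqrt y)]

/-- The surrogate `h(·|ũ)` majorizes `L` at `ũ`: `h(u|ũ) ≥ L(u)` for all `u`,
and `h(ũ|ũ) = L(ũ)`. -/
theorem surrogate_majorizes (I J : ℕ) (hI : 0 < I) (hJ : 0 < J)
    (Y : Fin I → ℝ) (M : Matrix (Fin I) (Fin J) ℝ) (ε μ : ℝ) (hε : 0 < ε) (hμ : 0 < μ)
    (ut : EuclideanSpace ℝ (Fin J)) :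
    (∀ u : EuclideanSpace ℝ (Fin J), surrogate Y M ε μ ut u ≥ Lloss Y M ε μ u) ∧
    surrogate Y M ε μ ut ut = Lloss Y M ε μ ut := by
  constructor
  · intro u
    unfold surrogate Lloss
    gcongr with i hi
    · have h1 : (0:ℝ) < (resid Y M ut i) ^ 2 + ε := by positivity
      have h2 := sqrt_le_tangent (x := (resid Y M u i) ^ 2 + ε) (y := (resid Y M ut i) ^ 2 + ε)
        (by positivity) h1
      have heq : (resid Y M u i) ^ 2 + ε - ((resid Y M ut i) ^ 2 + ε)
          = (resid Y M u i) ^ 2 - (resid Y M ut i) ^ 2 := by ring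
      rw [heq] at h2
      exact h2
  · unfold surrogate Lloss
    congr 1
    apply Finset.sum_congr rfl
    intro i _
    simp
end
end

section
/- Fixed-point characterization of the minimizer: a vector u ∈ ℝ^J is the (unique) global minimizer of L if and only if (MᵀW(u)M + μ·Id)·u = MᵀW(u)·Y, where W(u) ∈ ℝ^{I×I} is the diagonal matrix with entries W(u)_{ii} = (r_i(u)² + ε)^{−1/2}; i.e., the minimizer of L is exactly the fixed point of the MM update map. -/
noncomputable section

open Matrix

/-- The diagonal weight matrix with `W(u)_{ii} = (r_i(u)² + ε)^{−1/2}`. -/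
def weightMat {I J : ℕ} (Y : Fin I → ℝ) (M : Matrix (Fin I) (Fin J) ℝ) (ε : ℝ)
    (u : EuclideanSpace ℝ (Fin J)) : Matrix (Fin I) (Fin I) ℝ :=
  Matrix.diagonal fun i => (Real.sqrt ((resid Y M u i) ^ 2 + ε))⁻¹

/-! The fixed-point equation says exactly that the gradient `∇L(u) = μu − MᵀW(u)r(u)` vanishes.
Since `x ↦ √(x² + ε)` lies above its tangent lines and `‖·‖²` is convex,
`L(v) ≥ L(u) + ⟨∇L(u), v − u⟩`, so a critical point is a global minimizer. Conversely, at a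
minimizer `u` the derivative at `0` of `t ↦ L(u + t ∇L(u))`, which is `‖∇L(u)‖²`, vanishes. -/

lemma sqrt_sq_add_add_div_mul_sub_le {ε : ℝ} (hε : 0 < ε) (a b : ℝ) :
    √(a ^ 2 + ε) + a / √(a ^ 2 + ε) * (b - a) ≤ √(b ^ 2 + ε) := by
  have hA : 0 < √(a ^ 2 + ε) := Real.sqrt_pos.mpr (by positivity)
  have hA2 : √(a ^ 2 + ε) ^ 2 = a ^ 2 + ε := Real.sq_sqrt (by positivity)
  have hB2 : √(b ^ 2 + ε) ^ 2 = b ^ 2 + ε := Real.sq_sqrt (by positivity)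
  have cauchy_schwarz : a * b + ε ≤ √(a ^ 2 + ε) * √(b ^ 2 + ε) := by
    rw [← Real.sqrt_mul (by positivity)]
    exact (le_abs_self _).trans
      (Real.abs_le_sqrt (by nlinarith [mul_nonneg hε.le (sq_nonneg (a - b))]))
  rw [← le_sub_iff_add_le', div_mul_eq_mul_div, div_le_iff₀ hA]
  nlinarith

lemma EuclideanSpace.real_norm_sq_eq_dotProduct {ι : Type*} [Fintype ι]
    (u : EuclideanSpace ℝ ι) : ‖u‖ ^ 2 = ⇑u ⬝ᵥ ⇑u := by
  rw [EuclideanSpace.real_norm_sq_eq]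
  simp [dotProduct, sq]

section

variable {I J : ℕ} (Y : Fin I → ℝ) (M : Matrix (Fin I) (Fin J) ℝ) (ε μ : ℝ)

def lossGrad (u : EuclideanSpace ℝ (Fin J)) : Fin J → ℝ :=
  μ • ⇑u - Mᵀ *ᵥ (weightMat Y M ε u *ᵥ resid Y M u)

lemma resid_eq_sub_mulVec (u : EuclideanSpace ℝ (Fin J)) : resid Y M u = Y - M *ᵥ ⇑u := rfl

lemma lossGrad_eq_mulVec_sub_mulVec (u : EuclideanSpace ℝ (Fin J)) :
    lossGrad Y M ε μ u = (Mᵀ * weightMat Y M ε u * M + μ • (1 : Matrix (Fin J) (Fin J) ℝ)) *ᵥ u -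
      (Mᵀ * weightMat Y M ε u) *ᵥ Y := by
  simp only [lossGrad, resid_eq_sub_mulVec, mulVec_sub, add_mulVec, smul_mulVec, one_mulVec,
    mulVec_mulVec, Matrix.mul_assoc]
  abel

lemma weightMat_mulVec (u : EuclideanSpace ℝ (Fin J)) (x : Fin I → ℝ) (i : Fin I) :
    (weightMat Y M ε u *ᵥ x) i = x i / √(resid Y M u i ^ 2 + ε) := by
  simp [weightMat, mulVec_diagonal, div_eq_inv_mul]

lemma Lloss_add_lossGrad_dotProduct_le (hε : 0 < ε) (hμ : 0 ≤ μ)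
    (u v : EuclideanSpace ℝ (Fin J)) :
    Lloss Y M ε μ u + lossGrad Y M ε μ u ⬝ᵥ (⇑v - ⇑u) ≤ Lloss Y M ε μ v := by
  have tangent : ∑ i, √(resid Y M u i ^ 2 + ε) +
      (weightMat Y M ε u *ᵥ resid Y M u) ⬝ᵥ (resid Y M v - resid Y M u) ≤
        ∑ i, √(resid Y M v i ^ 2 + ε) := by
    simp only [dotProduct, weightMat_mulVec, Pi.sub_apply, ← Finset.sum_add_distrib]
    refine Finset.sum_le_sum fun i _ => ?_
    exact sqrt_sq_add_add_div_mul_sub_le hε (resid Y M u i) (resid Y M v i)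
  have resid_sub : resid Y M v - resid Y M u = -(M *ᵥ (⇑v - ⇑u)) := by
    simp only [resid_eq_sub_mulVec, mulVec_sub]
    abel
  have quadratic : μ / 2 * ‖u‖ ^ 2 + μ * (⇑u ⬝ᵥ (⇑v - ⇑u)) ≤ μ / 2 * ‖v‖ ^ 2 := by
    have := mul_nonneg hμ (dotProduct_self_star_nonneg (⇑v - ⇑u))
    simp only [EuclideanSpace.real_norm_sq_eq_dotProduct, star_trivial, dotProduct_sub,
      sub_dotProduct, dotProduct_comm ⇑v ⇑u] at this ⊢
    nlinarith
  rw [resid_sub, dotProduct_neg, dotProduct_mulVec, ← mulVec_transpose] at tangent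
  simp only [lossGrad, sub_dotProduct, smul_dotProduct, smul_eq_mul, Lloss]
  linarith

lemma resid_add_smul (u d : EuclideanSpace ℝ (Fin J)) (t : ℝ) (i : Fin I) :
    resid Y M (u + t • d) i = resid Y M u i - t * (M *ᵥ ⇑d) i := by
  simp only [resid_eq_sub_mulVec, WithLp.ofLp_add, WithLp.ofLp_smul, mulVec_add, mulVec_smul,
    Pi.sub_apply, Pi.add_apply, Pi.smul_apply, smul_eq_mul]
  ring

lemma hasDerivAt_Lloss_add_smul (hε : 0 < ε) (u d : EuclideanSpace ℝ (Fin J)) :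
    HasDerivAt (fun t : ℝ => Lloss Y M ε μ (u + t • d)) (lossGrad Y M ε μ u ⬝ᵥ ⇑d) 0 := by
  have hresid (i : Fin I) :
      HasDerivAt (fun t : ℝ => resid Y M (u + t • d) i) (-(M *ᵥ ⇑d) i) 0 := by
    simp only [resid_add_smul]
    simpa using ((hasDerivAt_id (0 : ℝ)).mul_const ((M *ᵥ ⇑d) i)).const_sub (resid Y M u i)
  have hsqrt (i : Fin I) : HasDerivAt (fun t : ℝ => √(resid Y M (u + t • d) i ^ 2 + ε))
      (resid Y M u i / √(resid Y M u i ^ 2 + ε) * -(M *ᵥ ⇑d) i) 0 := by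
    refine (((hresid i).pow 2).add_const ε).sqrt (by simp; positivity) |>.congr_deriv ?_
    simp only [Pi.pow_apply, resid_add_smul, zero_mul, sub_zero, Nat.cast_ofNat]
    field_simp
    ring
  have hnorm := (((hasDerivAt_id (0 : ℝ)).smul_const d).const_add u).norm_sq.const_mul (μ / 2)
  refine (HasDerivAt.fun_sum (u := Finset.univ) fun i _ => hsqrt i).add hnorm |>.congr_deriv ?_
  rw [lossGrad, sub_dotProduct, smul_dotProduct, mulVec_transpose, ← dotProduct_mulVec]
  simp only [id, zero_smul, add_zero, one_smul, EuclideanSpace.inner_eq_star_dotProduct,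
    star_trivial, dotProduct_comm ⇑d, smul_eq_mul]
  simp only [dotProduct, weightMat_mulVec, mul_neg, Finset.sum_neg_distrib]
  ring

end

theorem Lloss_min_iff_fixed_point_general (I J : ℕ)
    (Y : Fin I → ℝ) (M : Matrix (Fin I) (Fin J) ℝ) (ε μ : ℝ) (hε : 0 < ε) (hμ : 0 < μ) :
    ∀ u : EuclideanSpace ℝ (Fin J),
      (∀ v : EuclideanSpace ℝ (Fin J), Lloss Y M ε μ u ≤ Lloss Y M ε μ v) ↔
        (Mᵀ * weightMat Y M ε u * M + μ • (1 : Matrix (Fin J) (Fin J) ℝ)) *ᵥ u =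
          (Mᵀ * weightMat Y M ε u) *ᵥ Y := by
  intro u
  rw [← sub_eq_zero, ← lossGrad_eq_mulVec_sub_mulVec]
  constructor
  · intro hmin
    set g := WithLp.toLp 2 (lossGrad Y M ε μ u)
    have hcrit : IsLocalMin (fun t : ℝ => Lloss Y M ε μ (u + t • g)) 0 :=
      Filter.Eventually.of_forall fun t => by simpa using hmin (u + t • g)
    simpa [g] using hcrit.hasDerivAt_eq_zero (hasDerivAt_Lloss_add_smul Y M ε μ hε u g)
  · intro hg v
    simpa [hg] using Lloss_add_lossGrad_dotProduct_le Y M ε μ hε hμ.le u v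

/-- Fixed-point characterization of the minimizer: `u` is the (unique) global minimizer
of `L` if and only if `(MᵀW(u)M + μ·Id)·u = MᵀW(u)·Y`, where `W(u)` is diagonal with
`W(u)_{ii} = (r_i(u)² + ε)^{−1/2}`. -/
theorem Lloss_min_iff_fixed_point (I J : ℕ) (hI : 0 < I) (hJ : 0 < J)
    (Y : Fin I → ℝ) (M : Matrix (Fin I) (Fin J) ℝ) (ε μ : ℝ) (hε : 0 < ε) (hμ : 0 < μ) :
    ∀ u : EuclideanSpace ℝ (Fin J),
      (∀ v : EuclideanSpace ℝ (Fin J), Lloss Y M ε μ u ≤ Lloss Y M ε μ v) ↔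
        (Mᵀ * weightMat Y M ε u * M + μ • (1 : Matrix (Fin J) (Fin J) ℝ)) *ᵥ u =
          (Mᵀ * weightMat Y M ε u) *ᵥ Y :=
  Lloss_min_iff_fixed_point_general I J Y M ε μ hε hμ
end
end
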